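/- Let m ≥ 1 be an integer and q_m(μ) = ((m−1)(m²−5m−2)/8)μ³ + (9m(m−3)/8)μ² + (13(m−1)/4)μ + 3. For m ≥ 6, q_m(μ) > 0 for all μ > 0. For 1 ≤ m ≤ 5, q_m has exactly one positive root μ_m, and for μ > 0 one has q_m(μ) ≥ 0 if and only if μ ≤ μ_m. Moreover μ₁ = 2/√3, μ₂ = (3+√73)/8, μ₃ = 2, μ₄ = (9+√129)/6, μ₅ = 2(3+√10), and μ₁ < μ₂ < μ₃ < μ₄ < μ₅. -/
import Mathlib


/-- `q_m(μ) = P_μ^m(1/2)` for the type `IV₃` representative polynomial. -/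
noncomputable def qIV3 (m : ℕ) (μ : ℝ) : ℝ :=
  (((m : ℝ) - 1) * ((m : ℝ) ^ 2 - 5 * (m : ℝ) - 2) / 8) * μ ^ 3 +
    (9 * (m : ℝ) * ((m : ℝ) - 3) / 8) * μ ^ 2 + (13 * ((m : ℝ) - 1) / 4) * μ + 3

lemma qIV3_key (q : ℝ → ℝ) (A : ℝ → ℝ) (R : ℝ) (hR : 0 < R)
    (hA : ∀ μ : ℝ, 0 < μ → 0 < A μ)
    (hfac : ∀ μ : ℝ, q μ = A μ * (R - μ)) :
    (∃! r : ℝ, 0 < r ∧ q r = 0) ∧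
    ∀ r : ℝ, 0 < r → q r = 0 → ∀ μ : ℝ, 0 < μ → (0 ≤ q μ ↔ μ ≤ r) := by
  have hroot : ∀ r : ℝ, 0 < r → q r = 0 → r = R := by
    intro r hr h0
    have h1 : A r * (R - r) = 0 := by rw [← hfac]; exact h0
    rcases mul_eq_zero.mp h1 with h | h
    · exact absurd h (ne_of_gt (hA r hr))
    · linarith
  constructor
  · refine ⟨R, ⟨hR, by rw [hfac]; ring⟩, ?_⟩
    rintro r ⟨hr, h0⟩; exact hroot r hr h0
  · intro r hr h0 μ hμ
    rw [hroot r hr h0, hfac]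
    have hAμ := hA μ hμ
    constructor
    · intro h; nlinarith
    · intro h; nlinarith

lemma s3 : Real.sqrt 3 ^ 2 = 3 := Real.sq_sqrt (by norm_num)
lemma s73 : Real.sqrt 73 ^ 2 = 73 := Real.sq_sqrt (by norm_num)
lemma s129 : Real.sqrt 129 ^ 2 = 129 := Real.sq_sqrt (by norm_num)
lemma s10 : Real.sqrt 10 ^ 2 = 10 := Real.sq_sqrt (by norm_num)

lemma s3_gt : (3/2 : ℝ) < Real.sqrt 3 := by
  nlinarith [s3, Real.sqrt_nonneg 3]
lemma s73_gt : (8 : ℝ) < Real.sqrt 73 := by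
  nlinarith [s73, Real.sqrt_nonneg 73]
lemma s73_lt : Real.sqrt 73 < 13 := by
  nlinarith [s73, Real.sqrt_nonneg 73]
lemma s129_gt : (11 : ℝ) < Real.sqrt 129 := by
  nlinarith [s129, Real.sqrt_nonneg 129]
lemma s129_lt : Real.sqrt 129 < 12 := by
  nlinarith [s129, Real.sqrt_nonneg 129]
lemma s10_gt : (3 : ℝ) < Real.sqrt 10 := by
  nlinarith [s10, Real.sqrt_nonneg 10]

lemma fac1 (μ : ℝ) : qIV3 1 μ = ((9/4) * (2 / Real.sqrt 3 + μ)) * (2 / Real.sqrt 3 - μ) := by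
  have h := s3
  have h0 : Real.sqrt 3 ≠ 0 := by nlinarith [s3_gt]
  unfold qIV3
  push_cast
  field_simp
  ring_nf
  nlinarith [h]

lemma fac2 (μ : ℝ) :
    qIV3 2 μ = ((μ + 3) * (μ - (3 - Real.sqrt 73) / 8)) * ((3 + Real.sqrt 73) / 8 - μ) := by
  have h := s73
  unfold qIV3; push_cast; linear_combination (-(μ + 3) / 64) * h

lemma fac3 (μ : ℝ) : qIV3 3 μ = ((1/2) * (4 * μ ^ 2 + 8 * μ + 3)) * (2 - μ) := by
  unfold qIV3; push_cast; ring

lemma fac4 (μ : ℝ) :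
    qIV3 4 μ = ((9/4) * (μ + 1) * (μ - (9 - Real.sqrt 129) / 6)) * ((9 + Real.sqrt 129) / 6 - μ) := by
  have h := s129
  unfold qIV3; push_cast; linear_combination (-(μ + 1) / 16) * h

lemma fac5 (μ : ℝ) :
    qIV3 5 μ = ((1/4) * (4 * μ + 3) * (μ - (6 - 2 * Real.sqrt 10))) * (2 * (3 + Real.sqrt 10) - μ) := by
  have h := s10
  unfold qIV3; push_cast; linear_combination (-(4 * μ + 3)) * h

lemma key1 : (∃! r : ℝ, 0 < r ∧ qIV3 1 r = 0) ∧
    ∀ r : ℝ, 0 < r → qIV3 1 r = 0 → ∀ μ : ℝ, 0 < μ → (0 ≤ qIV3 1 μ ↔ μ ≤ r) := by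
  refine qIV3_key _ _ _ ?_ ?_ fac1
  · positivity
  · intro μ hμ
    have : 0 < 2 / Real.sqrt 3 := by positivity
    positivity

lemma key2 : (∃! r : ℝ, 0 < r ∧ qIV3 2 r = 0) ∧
    ∀ r : ℝ, 0 < r → qIV3 2 r = 0 → ∀ μ : ℝ, 0 < μ → (0 ≤ qIV3 2 μ ↔ μ ≤ r) := by
  refine qIV3_key _ _ _ ?_ ?_ fac2
  · nlinarith [s73_gt]
  · intro μ hμ
    have h := s73_gt
    nlinarith

lemma key3 : (∃! r : ℝ, 0 < r ∧ qIV3 3 r = 0) ∧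
    ∀ r : ℝ, 0 < r → qIV3 3 r = 0 → ∀ μ : ℝ, 0 < μ → (0 ≤ qIV3 3 μ ↔ μ ≤ r) := by
  refine qIV3_key _ _ _ (by norm_num) ?_ fac3
  intro μ hμ; nlinarith

lemma key4 : (∃! r : ℝ, 0 < r ∧ qIV3 4 r = 0) ∧
    ∀ r : ℝ, 0 < r → qIV3 4 r = 0 → ∀ μ : ℝ, 0 < μ → (0 ≤ qIV3 4 μ ↔ μ ≤ r) := by
  refine qIV3_key _ _ _ ?_ ?_ fac4
  · nlinarith [s129_gt]
  · intro μ hμ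
    have h := s129_gt
    nlinarith

lemma key5 : (∃! r : ℝ, 0 < r ∧ qIV3 5 r = 0) ∧
    ∀ r : ℝ, 0 < r → qIV3 5 r = 0 → ∀ μ : ℝ, 0 < μ → (0 ≤ qIV3 5 μ ↔ μ ≤ r) := by
  refine qIV3_key _ _ _ ?_ ?_ fac5
  · nlinarith [s10_gt]
  · intro μ hμ
    have h := s10_gt
    nlinarith

/-- Sign of `q_m` for type `IV₃`: positivity for `m ≥ 6`; for `1 ≤ m ≤ 5` a
unique positive root `μ_m` characterizing the sign, with explicit values
`μ₁ = 2/√3 < μ₂ = (3+√73)/8 < μ₃ = 2 < μ₄ = (9+√129)/6 < μ₅ = 2(3+√10)`. -/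
theorem qIV3_sign :
    (∀ m : ℕ, 6 ≤ m → ∀ μ : ℝ, 0 < μ → 0 < qIV3 m μ) ∧
    (∀ m : ℕ, 1 ≤ m → m ≤ 5 → ∃! r : ℝ, 0 < r ∧ qIV3 m r = 0) ∧
    (∀ m : ℕ, 1 ≤ m → m ≤ 5 → ∀ r : ℝ, 0 < r → qIV3 m r = 0 →
      ∀ μ : ℝ, 0 < μ → (0 ≤ qIV3 m μ ↔ μ ≤ r)) ∧
    qIV3 1 (2 / Real.sqrt 3) = 0 ∧
    qIV3 2 ((3 + Real.sqrt 73) / 8) = 0 ∧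
    qIV3 3 2 = 0 ∧
    qIV3 4 ((9 + Real.sqrt 129) / 6) = 0 ∧
    qIV3 5 (2 * (3 + Real.sqrt 10)) = 0 ∧
    2 / Real.sqrt 3 < (3 + Real.sqrt 73) / 8 ∧
    (3 + Real.sqrt 73) / 8 < 2 ∧
    (2 : ℝ) < (9 + Real.sqrt 129) / 6 ∧
    (9 + Real.sqrt 129) / 6 < 2 * (3 + Real.sqrt 10) := by
  refine ⟨?_, ?_, ?_, ?_, ?_, ?_, ?_, ?_, ?_, ?_, ?_, ?_⟩
  · intro m hm μ hμ
    have hm' : (6 : ℝ) ≤ (m : ℝ) := by exact_mod_cast hm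
    unfold qIV3
    have h1 : 0 ≤ ((m : ℝ) - 1) * ((m : ℝ) ^ 2 - 5 * (m : ℝ) - 2) / 8 := by nlinarith
    have h2 : 0 ≤ 9 * (m : ℝ) * ((m : ℝ) - 3) / 8 := by nlinarith
    have h3 : 0 ≤ 13 * ((m : ℝ) - 1) / 4 := by nlinarith
    have hμ3 : 0 < μ ^ 3 := by positivity
    have hμ2 : 0 < μ ^ 2 := by positivity
    nlinarith [mul_nonneg h1 hμ3.le, mul_nonneg h2 hμ2.le, mul_nonneg h3 hμ.le]
  · intro m h1 h5
    interval_cases m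
    · exact key1.1
    · exact key2.1
    · exact key3.1
    · exact key4.1
    · exact key5.1
  · intro m h1 h5
    interval_cases m
    · exact key1.2
    · exact key2.2
    · exact key3.2
    · exact key4.2
    · exact key5.2
  · rw [fac1]; ring
  · rw [fac2]; ring
  · rw [fac3]; ring
  · rw [fac4]; ring
  · rw [fac5]; ring
  · have h1 := s3_gt
    have h2 := s73_gt
    have h0 : (0:ℝ) < Real.sqrt 3 := by linarith
    rw [div_lt_div_iff₀ h0 (by norm_num)]
    nlinarith
  · nlinarith [s73_lt]
  · nlinarith [s129_gt]
  · nlinarith [s129_lt, s10_gt]
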